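/- arXiv:1412.6039 — 2 statements merged into one kernel-verified Lean document; each statement's English description precedes it below -/
import Mathlib

section
/- Let D, W : ℤ × ℤ → ℝ be finitely supported and let (D * W)(i, j) = Σ_{(p,q)} D(i − p, j − q) · W(p, q) denote 2D convolution. For any positive integer n, zero-upsampling commutes with convolution: h(D * W, n) = h(D, n) * h(W, n). -/
/-- Zero-upsampling operator. -/
noncomputable def h (Y : ℤ × ℤ → ℝ) (n : ℕ+) : ℤ × ℤ → ℝ :=
  fun p => if (n : ℤ) ∣ p.1 ∧ (n : ℤ) ∣ p.2 then Y (p.1 / (n : ℤ), p.2 / (n : ℤ)) else 0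

/-- 2D convolution: `(conv A B) (i,j) = Σ_{(p,q)} A (i-p, j-q) * B (p,q)`. -/
noncomputable def conv (A B : ℤ × ℤ → ℝ) : ℤ × ℤ → ℝ :=
  fun x => ∑ᶠ p : ℤ × ℤ, A (x.1 - p.1, x.2 - p.2) * B p

theorem zero_upsampling_conv (D W : ℤ × ℤ → ℝ)
    (hD : (Function.support D).Finite) (hW : (Function.support W).Finite) (n : ℕ+) :
    h (conv D W) n = conv (h D n) (h W n) := by
  have hn : (0:ℤ) < (n:ℤ) := by exact_mod_cast n.pos
  funext x
  obtain ⟨i, j⟩ := x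
  set F : ℤ × ℤ → ℝ := fun q => h D n (i - q.1, j - q.2) * h W n q with hF
  have key : ∀ q, F q ≠ 0 → (n:ℤ) ∣ q.1 ∧ (n:ℤ) ∣ q.2 ∧ (n:ℤ) ∣ (i - q.1) ∧ (n:ℤ) ∣ (j - q.2) := by
    intro q hq
    simp only [hF, h] at hq
    by_cases h1 : (n:ℤ) ∣ q.1 ∧ (n:ℤ) ∣ q.2
    · by_cases h2 : (n:ℤ) ∣ (i - q.1) ∧ (n:ℤ) ∣ (j - q.2)
      · exact ⟨h1.1, h1.2, h2.1, h2.2⟩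
      · simp [h2] at hq
    · simp [h1] at hq
  by_cases hij : (n:ℤ) ∣ i ∧ (n:ℤ) ∣ j
  · -- divisible case
    obtain ⟨⟨a, ha⟩, ⟨b, hb⟩⟩ := hij
    have hia : i / (n:ℤ) = a := by rw [ha]; exact Int.mul_ediv_cancel_left a hn.ne'
    have hjb : j / (n:ℤ) = b := by rw [hb]; exact Int.mul_ediv_cancel_left b hn.ne'
    have hLHS : h (conv D W) n (i, j) =
        ∑ᶠ p : ℤ × ℤ, D (a - p.1, b - p.2) * W p := by
      simp only [h, conv]
      rw [if_pos ⟨⟨a, ha⟩, ⟨b, hb⟩⟩, hia, hjb]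
    set g : ℤ × ℤ → ℤ × ℤ := fun p => ((n:ℤ) * p.1, (n:ℤ) * p.2) with hg
    have hginj : Function.Injective g := by
      intro p q hpq
      simp only [hg, Prod.ext_iff] at hpq ⊢
      exact ⟨by
        have := hpq.1; exact mul_left_cancel₀ hn.ne' this,
        mul_left_cancel₀ hn.ne' hpq.2⟩
    have hrange : ∀ q ∈ Function.support F, q ∈ Set.univ ↔ q ∈ Set.range g := by
      intro q hq
      obtain ⟨⟨c, hc⟩, ⟨d, hd⟩, _, _⟩ := key q (by simpa using hq)
      simp only [Set.mem_univ, true_iff, Set.mem_range]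
      exact ⟨(c, d), by simp [hg, ← hc, ← hd]⟩
    have hcomp : ∀ p : ℤ × ℤ, F (g p) = D (a - p.1, b - p.2) * W p := by
      intro p
      simp only [hF, hg, h]
      rw [if_pos ⟨⟨a - p.1, by rw [ha]; ring⟩, ⟨b - p.2, by rw [hb]; ring⟩⟩,
        if_pos ⟨⟨p.1, rfl⟩, ⟨p.2, rfl⟩⟩]
      have e1 : (i - (n:ℤ) * p.1) / (n:ℤ) = a - p.1 := by
        rw [ha, ← mul_sub]; exact Int.mul_ediv_cancel_left _ hn.ne'
      have e2 : (j - (n:ℤ) * p.2) / (n:ℤ) = b - p.2 := by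
        rw [hb, ← mul_sub]; exact Int.mul_ediv_cancel_left _ hn.ne'
      have e3 : ((n:ℤ) * p.1) / (n:ℤ) = p.1 := Int.mul_ediv_cancel_left _ hn.ne'
      have e4 : ((n:ℤ) * p.2) / (n:ℤ) = p.2 := Int.mul_ediv_cancel_left _ hn.ne'
      rw [e1, e2, e3, e4]
    calc h (conv D W) n (i, j) = ∑ᶠ p : ℤ × ℤ, D (a - p.1, b - p.2) * W p := hLHS
      _ = ∑ᶠ p : ℤ × ℤ, F (g p) := by exact finsum_congr fun p => (hcomp p).symm
      _ = ∑ᶠ q ∈ Set.range g, F q := (finsum_mem_range hginj).symm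
      _ = ∑ᶠ q ∈ Set.univ, F q := finsum_mem_inter_support_eq F _ _
            (by rw [Set.univ_inter]
                exact Set.inter_eq_right.mpr (fun q hq => (hrange q hq).mp trivial))
      _ = ∑ᶠ q, F q := finsum_mem_univ F
      _ = conv (h D n) (h W n) (i, j) := rfl
  · -- non-divisible case: both sides are 0
    have hLHS : h (conv D W) n (i, j) = 0 := by simp [h, hij]
    have hRHS : conv (h D n) (h W n) (i, j) = 0 := by
      have : ∀ q, F q = 0 := by
        intro q
        by_cases hq : F q = 0
        · exact hq
        · exfalso
          obtain ⟨⟨c, hc⟩, ⟨d, hd⟩, ⟨e, he⟩, ⟨f, hf⟩⟩ := key q hq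
          exact hij ⟨⟨c + e, by linarith [hc, he]⟩, ⟨d + f, by linarith [hd, hf]⟩⟩
      simp only [conv]
      exact finsum_eq_zero_of_forall_eq_zero this
    rw [hLHS, hRHS]
end

section
/- Let D, W : ℤ × ℤ → ℝ be finitely supported, and let n be a positive integer. Then g(D * W, n) = g(D, n) * h(W, n), where g is replication-upsampling, h is zero-upsampling, and * is 2D convolution. That is, replicating the output of a convolution by factor n equals convolving the replicated filter with the zero-upsampled activations. -/
/-- Replication-upsampling operator (floor division). -/
noncomputable def g (Y : ℤ × ℤ → ℝ) (n : ℕ+) : ℤ × ℤ → ℝ :=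
  fun p => Y (p.1.fdiv (n : ℤ), p.2.fdiv (n : ℤ))

lemma sub_mul_fdiv (x a : ℤ) {c : ℤ} (hc : 0 < c) :
    (x - c * a).fdiv c = x.fdiv c - a := by
  rw [Int.fdiv_eq_ediv_of_nonneg _ hc.le, Int.fdiv_eq_ediv_of_nonneg _ hc.le]
  have : x - c * a = x + (-a) * c := by ring
  rw [this, Int.add_mul_ediv_right _ _ hc.ne']
  ring

theorem replication_upsampling_conv (D W : ℤ × ℤ → ℝ)
    (hD : (Function.support D).Finite) (hW : (Function.support W).Finite) (n : ℕ+) :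
    g (conv D W) n = conv (g D n) (h W n) := by
  have hn : (0 : ℤ) < (n : ℤ) := by exact_mod_cast n.pos
  funext x
  obtain ⟨x1, x2⟩ := x
  set e : ℤ × ℤ → ℤ × ℤ := fun q => ((n : ℤ) * q.1, (n : ℤ) * q.2) with he
  have hinj : Function.Injective e := by
    intro a b hab
    simp only [he, Prod.mk.injEq, Prod.ext_iff] at hab ⊢
    exact ⟨by have := hab.1; exact mul_left_cancel₀ hn.ne' this,
      by have := hab.2; exact mul_left_cancel₀ hn.ne' this⟩
  set f : ℤ × ℤ → ℝ := fun p => g D n (x1 - p.1, x2 - p.2) * h W n p with hf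
  have hsupp : Function.support f ⊆ Set.range e := by
    intro p hp
    have : h W n p ≠ 0 := by
      intro h0; apply hp; simp [hf, h0]
    simp only [h] at this
    by_cases hd : (n : ℤ) ∣ p.1 ∧ (n : ℤ) ∣ p.2
    · obtain ⟨⟨a, ha⟩, ⟨b, hb⟩⟩ := hd
      exact ⟨(a, b), by simp [he, ha.symm, hb.symm]⟩
    · simp [hd] at this
  have key : ∀ q : ℤ × ℤ, f (e q) =
      D (x1.fdiv n - q.1, x2.fdiv n - q.2) * W q := by
    intro ⟨a, b⟩
    simp only [hf, he, g, h]
    rw [if_pos ⟨Dvd.intro a rfl, Dvd.intro b rfl⟩]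
    rw [sub_mul_fdiv _ _ hn, sub_mul_fdiv _ _ hn,
      Int.mul_ediv_cancel_left _ hn.ne', Int.mul_ediv_cancel_left _ hn.ne']
  calc g (conv D W) n (x1, x2)
      = ∑ᶠ q : ℤ × ℤ, D (x1.fdiv n - q.1, x2.fdiv n - q.2) * W q := rfl
    _ = ∑ᶠ q : ℤ × ℤ, f (e q) := by simp_rw [key]
    _ = ∑ᶠ p ∈ Set.range e, f p := (finsum_mem_range hinj).symm
    _ = ∑ᶠ p ∈ (Set.univ : Set (ℤ × ℤ)), f p := by
        apply finsum_mem_inter_support_eq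
        rw [Set.univ_inter, Set.inter_eq_right.mpr hsupp]
    _ = ∑ᶠ p : ℤ × ℤ, f p := finsum_mem_univ f
    _ = conv (g D n) (h W n) (x1, x2) := rfl
end
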